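/- arXiv:2509.11660 — 8 statements merged into one kernel-verified Lean document; each statement's English description precedes it below -/
import Mathlib

section
/- Let S be a finite nonempty set and ℙ a nonempty finite collection of nonempty compact convex subsets of the probability simplex Δ(S). If for all φ ∈ ℝ^S we have max over P∈ℙ of min over p∈P of E_p[φ] ≥ 0 or max over P∈ℙ of min over p∈P of E_p[−φ] ≥ 0 (completeness of the induced relation), then for all φ ∈ ℝ^S, max_{P∈ℙ} min_{p∈P} E_p[φ] ≥ min_{P∈ℙ} max_{p∈P} E_p[φ]. -/
open scoped BigOperators

noncomputable def Ep {S : Type*} [Fintype S] (p φ : S → ℝ) : ℝ := ∑ s, p s * φ s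

def probSimplex (S : Type*) [Fintype S] : Set (S → ℝ) :=
  {p | (∀ s, 0 ≤ p s) ∧ ∑ s, p s = 1}

noncomputable def Fmm {S : Type*} [Fintype S] (PP : Finset (Set (S → ℝ))) (φ : S → ℝ) : ℝ :=
  sSup ((fun P => sInf ((fun p => Ep p φ) '' P)) '' (PP : Set (Set (S → ℝ))))

noncomputable def Gmm {S : Type*} [Fintype S] (PP : Finset (Set (S → ℝ))) (φ : S → ℝ) : ℝ :=
  sInf ((fun P => sSup ((fun p => Ep p φ) '' P)) '' (PP : Set (Set (S → ℝ))))

def GoodColl {S : Type*} [Fintype S] (PP : Finset (Set (S → ℝ))) : Prop :=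
  PP.Nonempty ∧ ∀ P ∈ PP, P.Nonempty ∧ IsCompact P ∧ Convex ℝ P ∧ P ⊆ probSimplex S

lemma Ep_continuous {S : Type*} [Fintype S] (φ : S → ℝ) :
    Continuous (fun p : S → ℝ => Ep p φ) := by
  unfold Ep
  exact continuous_finset_sum _ fun s _ => (continuous_apply s).mul continuous_const

lemma Ep_sub_const {S : Type*} [Fintype S] {p : S → ℝ} (hp : p ∈ probSimplex S)
    (φ : S → ℝ) (c : ℝ) : Ep p (fun s => φ s - c) = Ep p φ - c := by
  have h1 : ∑ s, p s = 1 := hp.2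
  simp only [Ep, mul_sub, Finset.sum_sub_distrib, ← Finset.sum_mul, h1, one_mul]

lemma Ep_neg {S : Type*} [Fintype S] (p φ : S → ℝ) : Ep p (-φ) = -Ep p φ := by
  simp only [Ep, Pi.neg_apply, mul_neg, ← Finset.sum_neg_distrib]

theorem stmt0 {S : Type*} [Fintype S] [Nonempty S]
    (PP : Finset (Set (S → ℝ))) (hPP : GoodColl PP)
    (hcomp : ∀ φ : S → ℝ, 0 ≤ Fmm PP φ ∨ 0 ≤ Fmm PP (-φ)) :
    ∀ φ : S → ℝ, Gmm PP φ ≤ Fmm PP φ := by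
  obtain ⟨hne, hgood⟩ := hPP
  intro φ
  apply le_of_forall_pos_le_add
  intro ε hε
  set c : ℝ := Fmm PP φ + ε with hc
  set ψ : S → ℝ := fun s => φ s - c with hψ
  -- basic facts about inner images
  have himg : ∀ χ : S → ℝ, ∀ P ∈ PP,
      ((fun p => Ep p χ) '' P).Nonempty ∧ IsCompact ((fun p => Ep p χ) '' P) := by
    intro χ P hP
    obtain ⟨hPne, hPc, _, _⟩ := hgood P hP
    exact ⟨hPne.image _, hPc.image (Ep_continuous χ)⟩
  -- outer sets are finite nonempty
  have houterfin : ∀ χ : S → ℝ,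
      ((fun P => sInf ((fun p => Ep p χ) '' P)) '' (PP : Set (Set (S → ℝ)))).Finite :=
    fun χ => PP.finite_toSet.image _
  have houterne : ∀ χ : S → ℝ,
      ((fun P => sInf ((fun p => Ep p χ) '' P)) '' (PP : Set (Set (S → ℝ)))).Nonempty :=
    fun χ => (Finset.coe_nonempty.mpr hne).image _
  -- Step 1: Fmm PP ψ < 0
  have hFψ : Fmm PP ψ < 0 := by
    have : Fmm PP ψ ≤ -ε := by
      apply csSup_le (houterne ψ)
      rintro x ⟨P, hP, rfl⟩
      obtain ⟨hAne, hAc⟩ := himg φ P hP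
      obtain ⟨hBne, hBc⟩ := himg ψ P hP
      have hmem : sInf ((fun p => Ep p φ) '' P) ∈ (fun p => Ep p φ) '' P :=
        hAc.sInf_mem hAne
      obtain ⟨p0, hp0, hp0e⟩ := hmem
      have hp0e' : Ep p0 φ = sInf ((fun p => Ep p φ) '' P) := hp0e
      have hsub : P ⊆ probSimplex S := (hgood P hP).2.2.2
      have h1 : sInf ((fun p => Ep p ψ) '' P) ≤ Ep p0 ψ :=
        csInf_le hBc.bddBelow ⟨p0, hp0, rfl⟩
      have h2 : Ep p0 ψ = Ep p0 φ - c := Ep_sub_const (hsub hp0) φ c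
      have h3 : sInf ((fun p => Ep p φ) '' P) ≤ Fmm PP φ :=
        le_csSup ((houterfin φ).bddAbove) ⟨P, hP, rfl⟩
      show sInf ((fun p => Ep p ψ) '' P) ≤ -ε
      rw [h2, hp0e'] at h1
      linarith
    linarith
  -- Step 2: completeness gives 0 ≤ Fmm PP (-ψ)
  have hFnψ : 0 ≤ Fmm PP (-ψ) := by
    rcases hcomp ψ with h | h
    · linarith
    · exact h
  -- Step 3: the sSup defining Fmm PP (-ψ) is attained at some P
  have hmem : Fmm PP (-ψ) ∈
      ((fun P => sInf ((fun p => Ep p (-ψ)) '' P)) '' (PP : Set (Set (S → ℝ)))) :=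
    (houterne (-ψ)).csSup_mem (houterfin (-ψ))
  obtain ⟨P, hP, hPe⟩ := hmem
  have hPe' : sInf ((fun p => Ep p (-ψ)) '' P) = Fmm PP (-ψ) := hPe
  obtain ⟨hAne, hAc⟩ := himg φ P hP
  obtain ⟨hBne, hBc⟩ := himg (-ψ) P hP
  have hsub : P ⊆ probSimplex S := (hgood P hP).2.2.2
  -- all p ∈ P satisfy Ep p φ ≤ c
  have hbound : ∀ p ∈ P, Ep p φ ≤ c := by
    intro p hp
    have h1 : sInf ((fun p => Ep p (-ψ)) '' P) ≤ Ep p (-ψ) :=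
      csInf_le hBc.bddBelow ⟨p, hp, rfl⟩
    have h2 : Ep p (-ψ) = -(Ep p φ - c) := by
      rw [Ep_neg, Ep_sub_const (hsub hp)]
    rw [h2, hPe'] at h1
    linarith
  have h4 : sSup ((fun p => Ep p φ) '' P) ≤ c := csSup_le hAne (by rintro x ⟨p, hp, rfl⟩; exact hbound p hp)
  have h5 : Gmm PP φ ≤ sSup ((fun p => Ep p φ) '' P) :=
    csInf_le ((PP.finite_toSet.image _).bddBelow) ⟨P, hP, rfl⟩
  linarith
end

section
/- Let S be a finite nonempty set and ℙ a nonempty finite collection of nonempty compact convex subsets of Δ(S). Suppose the relation defined by φ ≽ 0 iff max_{P∈ℙ} min_{p∈P} E_p[φ] ≥ 0 satisfies constant-bound transitivity: for all φ ∈ ℝ^S and constants a, b ∈ ℝ, if a·1 − φ ≽ 0 and φ − b·1 ≽ 0 then a ≥ b. Then for all φ ∈ ℝ^S, min_{P∈ℙ} max_{p∈P} E_p[φ] ≥ max_{P∈ℙ} min_{p∈P} E_p[φ]. -/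
open scoped BigOperators

lemma sInf_const_sub (a : ℝ) (T : Set ℝ) (hne : T.Nonempty) (hbdd : BddAbove T) :
    sInf ((fun x => a - x) '' T) = a - sSup T := by
  apply IsGLB.csInf_eq
  · constructor
    · rintro y ⟨x, hx, rfl⟩
      have := le_csSup hbdd hx; dsimp; linarith
    · intro c hc
      have : sSup T ≤ a - c := csSup_le hne (fun x hx => by
        have := hc ⟨x, hx, rfl⟩; dsimp at this; linarith)
      linarith
  · exact hne.image _

lemma sSup_const_sub (a : ℝ) (T : Set ℝ) (hne : T.Nonempty) (hbdd : BddBelow T) :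
    sSup ((fun x => a - x) '' T) = a - sInf T := by
  apply IsLUB.csSup_eq
  · constructor
    · rintro y ⟨x, hx, rfl⟩
      have := csInf_le hbdd hx; dsimp; linarith
    · intro c hc
      have : a - c ≤ sInf T := le_csInf hne (fun x hx => by
        have := hc ⟨x, hx, rfl⟩; dsimp at this; linarith)
      linarith
  · exact hne.image _

lemma sInf_sub_const (b : ℝ) (T : Set ℝ) (hne : T.Nonempty) (hbdd : BddBelow T) :
    sInf ((fun x => x - b) '' T) = sInf T - b := by
  apply IsGLB.csInf_eq
  · constructor
    · rintro y ⟨x, hx, rfl⟩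
      have := csInf_le hbdd hx; dsimp; linarith
    · intro c hc
      have : c + b ≤ sInf T := le_csInf hne (fun x hx => by
        have := hc ⟨x, hx, rfl⟩; dsimp at this; linarith)
      linarith
  · exact hne.image _

lemma sSup_sub_const (b : ℝ) (T : Set ℝ) (hne : T.Nonempty) (hbdd : BddAbove T) :
    sSup ((fun x => x - b) '' T) = sSup T - b := by
  apply IsLUB.csSup_eq
  · constructor
    · rintro y ⟨x, hx, rfl⟩
      have := le_csSup hbdd hx; dsimp; linarith
    · intro c hc
      have : sSup T ≤ c + b := csSup_le hne (fun x hx => by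
        have := hc ⟨x, hx, rfl⟩; dsimp at this; linarith)
      linarith
  · exact hne.image _

theorem stmt1 {S : Type*} [Fintype S] [Nonempty S]
    (PP : Finset (Set (S → ℝ))) (hPP : GoodColl PP)
    (hcbt : ∀ (φ : S → ℝ) (a b : ℝ),
      0 ≤ Fmm PP ((fun _ => a) - φ) → 0 ≤ Fmm PP (φ - fun _ => b) → b ≤ a) :
    ∀ φ : S → ℝ, Fmm PP φ ≤ Gmm PP φ := by
  intro φ
  obtain ⟨hPPne, hgood⟩ := hPP
  set a := Gmm PP φ with ha
  set b := Fmm PP φ with hb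
  -- basic facts about images
  have himg : ∀ P ∈ PP, ((fun p => Ep p φ) '' P).Nonempty ∧
      BddBelow ((fun p => Ep p φ) '' P) ∧ BddAbove ((fun p => Ep p φ) '' P) := by
    intro P hP
    obtain ⟨hne, hcomp, _, _⟩ := hgood P hP
    have hc : IsCompact ((fun p => Ep p φ) '' P) := hcomp.image (Ep_continuous φ)
    exact ⟨hne.image _, hc.bddBelow, hc.bddAbove⟩
  -- Ep linearity over simplex
  have hEp1 : ∀ (c : ℝ) (p : S → ℝ), p ∈ probSimplex S →
      Ep p ((fun _ => c) - φ) = c - Ep p φ := by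
    intro c p hp
    have h1 : ∑ s, p s = 1 := hp.2
    simp only [Ep, Pi.sub_apply]
    simp [mul_sub, Finset.sum_sub_distrib, ← Finset.sum_mul, h1]
  have hEp2 : ∀ (c : ℝ) (p : S → ℝ), p ∈ probSimplex S →
      Ep p (φ - fun _ => c) = Ep p φ - c := by
    intro c p hp
    simp only [Ep, Pi.sub_apply]
    simp [mul_sub, Finset.sum_sub_distrib, ← Finset.sum_mul, hp.2]
  -- inner rewrites
  have hinner1 : ∀ P ∈ PP,
      sInf ((fun p => Ep p ((fun _ => a) - φ)) '' P)
        = a - sSup ((fun p => Ep p φ) '' P) := by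
    intro P hP
    obtain ⟨hne, hbb, hba⟩ := himg P hP
    have hsub := (hgood P hP).2.2.2
    have : (fun p => Ep p ((fun _ => a) - φ)) '' P
        = (fun x => a - x) '' ((fun p => Ep p φ) '' P) := by
      rw [Set.image_image]
      exact Set.image_congr (fun p hp => hEp1 a p (hsub hp))
    rw [this, sInf_const_sub a _ hne hba]
  have hinner2 : ∀ P ∈ PP,
      sInf ((fun p => Ep p (φ - fun _ => b)) '' P)
        = sInf ((fun p => Ep p φ) '' P) - b := by
    intro P hP
    obtain ⟨hne, hbb, hba⟩ := himg P hP
    have hsub := (hgood P hP).2.2.2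
    have : (fun p => Ep p (φ - fun _ => b)) '' P
        = (fun x => x - b) '' ((fun p => Ep p φ) '' P) := by
      rw [Set.image_image]
      exact Set.image_congr (fun p hp => hEp2 b p (hsub hp))
    rw [this, sInf_sub_const b _ hne hbb]
  -- outer sets
  have hPPne' : (PP : Set (Set (S → ℝ))).Nonempty := by
    exact_mod_cast hPPne
  have hfinI : ((fun P => sInf ((fun p => Ep p φ) '' P)) '' (PP : Set (Set (S → ℝ)))).Finite :=
    (PP.finite_toSet).image _
  have hfinS : ((fun P => sSup ((fun p => Ep p φ) '' P)) '' (PP : Set (Set (S → ℝ)))).Finite :=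
    (PP.finite_toSet).image _
  have hneI := hPPne'.image (fun P => sInf ((fun p => Ep p φ) '' P))
  have hneS := hPPne'.image (fun P => sSup ((fun p => Ep p φ) '' P))
  -- compute Fmm ((a) - φ) = a - Gmm φ = 0
  have hF1 : Fmm PP ((fun _ => a) - φ) = 0 := by
    have : (fun P => sInf ((fun p => Ep p ((fun _ => a) - φ)) '' P)) '' (PP : Set (Set (S → ℝ)))
        = (fun x => a - x) '' ((fun P => sSup ((fun p => Ep p φ) '' P)) '' (PP : Set (Set (S → ℝ)))) := by
      rw [Set.image_image]
      exact Set.image_congr hinner1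
    rw [Fmm, this, sSup_const_sub a _ hneS hfinS.bddBelow]
    simp [ha, Gmm]
  have hF2 : Fmm PP (φ - fun _ => b) = 0 := by
    have : (fun P => sInf ((fun p => Ep p (φ - fun _ => b)) '' P)) '' (PP : Set (Set (S → ℝ)))
        = (fun x => x - b) '' ((fun P => sInf ((fun p => Ep p φ) '' P)) '' (PP : Set (Set (S → ℝ)))) := by
      rw [Set.image_image]
      exact Set.image_congr hinner2
    rw [Fmm, this, sSup_sub_const b _ hneI hfinI.bddAbove]
    simp [hb, Fmm]
  exact hcbt φ a b (le_of_eq hF1.symm) (le_of_eq hF2.symm)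
end

section
/- Let S be a finite nonempty set, and let P₁, P₂ be nonempty compact convex subsets of the probability simplex Δ(S). Then P₁ ∩ P₂ = ∅ if and only if there exist φ₁, φ₂ ∈ ℝ^S with φ₁ + φ₂ = 0 such that min_{p∈P₁} E_p[φ₁] > 0 and min_{p∈P₂} E_p[φ₂] > 0. -/
open scoped BigOperators

lemma Ep_eq_clm {S : Type*} [Fintype S] [DecidableEq S] (f : (S → ℝ) →L[ℝ] ℝ) (p : S → ℝ) :
    Ep p (fun s => f (Pi.single s 1)) = f p := by
  conv_rhs => rw [pi_eq_sum_univ p]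
  rw [map_sum]
  unfold Ep
  refine Finset.sum_congr rfl fun s _ => ?_
  rw [map_smul, smul_eq_mul]
  have h : (Pi.single s 1 : S → ℝ) = fun j => if s = j then 1 else 0 := by
    ext j; simp [Pi.single_apply, eq_comm]
  show p s * f (Pi.single s 1) = p s * f fun j => if s = j then 1 else 0
  rw [h]

theorem stmt8 {S : Type*} [Fintype S] [Nonempty S]
    (P₁ P₂ : Set (S → ℝ))
    (h₁ : P₁.Nonempty) (h₁c : IsCompact P₁) (h₁v : Convex ℝ P₁) (h₁s : P₁ ⊆ probSimplex S)
    (h₂ : P₂.Nonempty) (h₂c : IsCompact P₂) (h₂v : Convex ℝ P₂) (h₂s : P₂ ⊆ probSimplex S) :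
    P₁ ∩ P₂ = ∅ ↔
      ∃ φ₁ φ₂ : S → ℝ, φ₁ + φ₂ = 0 ∧
        0 < sInf ((fun p => Ep p φ₁) '' P₁) ∧
        0 < sInf ((fun p => Ep p φ₂) '' P₂) := by
  classical
  constructor
  · intro hdisj
    obtain ⟨f, u, v, hfu, huv, hvf⟩ :=
      geometric_hahn_banach_compact_closed h₁v h₁c h₂v h₂c.isClosed
        (Set.disjoint_iff_inter_eq_empty.mpr hdisj)
    set c : ℝ := (u + v) / 2 with hc
    refine ⟨fun s => c - f (Pi.single s 1), fun s => f (Pi.single s 1) - c, ?_, ?_, ?_⟩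
    · funext s; simp
    · have key : ∀ p ∈ P₁, (v - u) / 2 ≤ Ep p (fun s => c - f (Pi.single s 1)) := by
        intro p hp
        have hsum : ∑ s, p s = 1 := (h₁s hp).2
        have : Ep p (fun s => c - f (Pi.single s 1)) = c - f p := by
          unfold Ep
          simp only [mul_sub]
          rw [Finset.sum_sub_distrib, ← Finset.sum_mul, hsum, one_mul]
          have := Ep_eq_clm f p
          unfold Ep at this
          rw [this]
        rw [this]
        have := hfu p hp
        linarith
      calc (0:ℝ) < (v - u) / 2 := by linarith
        _ ≤ sInf _ := le_csInf (h₁.image _) (by rintro x ⟨p, hp, rfl⟩; exact key p hp)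
    · have key : ∀ p ∈ P₂, (v - u) / 2 ≤ Ep p (fun s => f (Pi.single s 1) - c) := by
        intro p hp
        have hsum : ∑ s, p s = 1 := (h₂s hp).2
        have : Ep p (fun s => f (Pi.single s 1) - c) = f p - c := by
          unfold Ep
          simp only [mul_sub]
          rw [Finset.sum_sub_distrib, ← Finset.sum_mul, hsum, one_mul]
          have := Ep_eq_clm f p
          unfold Ep at this
          rw [this]
        rw [this]
        have := hvf p hp
        linarith
      calc (0:ℝ) < (v - u) / 2 := by linarith
        _ ≤ sInf _ := le_csInf (h₂.image _) (by rintro x ⟨p, hp, rfl⟩; exact key p hp)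
  · rintro ⟨φ₁, φ₂, hsum, hs1, hs2⟩
    by_contra hne
    obtain ⟨p, hp₁, hp₂⟩ := Set.inter_nonempty.mp (Set.nonempty_iff_ne_empty.mpr hne)
    have hb1 : BddBelow ((fun p => Ep p φ₁) '' P₁) :=
      (h₁c.image (Ep_continuous φ₁)).bddBelow
    have hb2 : BddBelow ((fun p => Ep p φ₂) '' P₂) :=
      (h₂c.image (Ep_continuous φ₂)).bddBelow
    have l1 : sInf ((fun p => Ep p φ₁) '' P₁) ≤ Ep p φ₁ :=
      csInf_le hb1 ⟨p, hp₁, rfl⟩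
    have l2 : sInf ((fun p => Ep p φ₂) '' P₂) ≤ Ep p φ₂ :=
      csInf_le hb2 ⟨p, hp₂, rfl⟩
    have : Ep p φ₁ + Ep p φ₂ = 0 := by
      unfold Ep
      rw [← Finset.sum_add_distrib]
      have : ∀ s, p s * φ₁ s + p s * φ₂ s = p s * (φ₁ s + φ₂ s) := fun s => (mul_add _ _ _).symm
      simp only [this]
      have h0 : ∀ s, φ₁ s + φ₂ s = 0 := fun s => congrFun hsum s
      simp [h0]
    linarith
end

section
/- Let S be a finite nonempty set and ℙ a nonempty finite collection of nonempty compact convex subsets of Δ(S). Suppose the relation φ ≽ ψ iff max_{P∈ℙ}min_{p∈P}E_p[φ−ψ] ≥ 0 satisfies constant-bound transitivity (for all φ ∈ ℝ^S, a, b ∈ ℝ: a·1 ≽ φ and φ ≽ b·1 imply a ≥ b). Then P ∩ P' ≠ ∅ for all P, P' ∈ ℙ. -/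
open scoped BigOperators

lemma Fmm_ge_of_mem {S : Type*} [Fintype S] (PP : Finset (Set (S → ℝ)))
    (P : Set (S → ℝ)) (hP : P ∈ PP) (ψ : S → ℝ) (hPne : P.Nonempty)
    (h : ∀ p ∈ P, 0 ≤ Ep p ψ) : 0 ≤ Fmm PP ψ := by
  have hmem : sInf ((fun p => Ep p ψ) '' P) ∈
      ((fun Q => sInf ((fun p => Ep p ψ) '' Q)) '' (PP : Set (Set (S → ℝ)))) :=
    ⟨P, hP, rfl⟩
  have hbdd : BddAbove ((fun Q => sInf ((fun p => Ep p ψ) '' Q)) '' (PP : Set (Set (S → ℝ)))) :=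
    (PP.finite_toSet.image _).bddAbove
  have h1 : 0 ≤ sInf ((fun p => Ep p ψ) '' P) := by
    apply Real.sInf_nonneg
    rintro x ⟨p, hp, rfl⟩
    exact h p hp
  exact h1.trans (le_csSup hbdd hmem)

theorem stmt10 {S : Type*} [Fintype S] [Nonempty S]
    (PP : Finset (Set (S → ℝ))) (hPP : GoodColl PP)
    (hcbt : ∀ (φ : S → ℝ) (a b : ℝ),
      0 ≤ Fmm PP ((fun _ => a) - φ) → 0 ≤ Fmm PP (φ - fun _ => b) → b ≤ a) :
    ∀ P ∈ PP, ∀ P' ∈ PP, (P ∩ P').Nonempty := by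
  classical
  obtain ⟨hne, hgood⟩ := hPP
  intro P hP P' hP'
  by_contra hdisj
  rw [Set.not_nonempty_iff_eq_empty] at hdisj
  obtain ⟨hPne, hPc, hPconv, hPsub⟩ := hgood P hP
  obtain ⟨hP'ne, hP'c, hP'conv, hP'sub⟩ := hgood P' hP'
  obtain ⟨f, u, v, hfu, huv, hvf⟩ :=
    geometric_hahn_banach_compact_closed hPconv hPc hP'conv hP'c.isClosed
      (Set.disjoint_iff_inter_eq_empty.mpr hdisj)
  set φ : S → ℝ := fun s => f (fun j => if s = j then 1 else 0) with hφ
  have hf : ∀ p : S → ℝ, f p = Ep p φ := by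
    intro p
    conv_lhs => rw [pi_eq_sum_univ p]
    rw [map_sum]
    simp [Ep, hφ, mul_comm]
  have hsum1 : ∀ p ∈ P ∪ P', ∑ s, p s = 1 := by
    intro p hp
    rcases hp with hp | hp
    · exact (hPsub hp).2
    · exact (hP'sub hp).2
  have hEa : ∀ (c : ℝ) (p : S → ℝ), ∑ s, p s = 1 →
      Ep p ((fun _ => c) - φ) = c - Ep p φ := by
    intro c p hp
    simp only [Ep, Pi.sub_apply, mul_sub, Finset.sum_sub_distrib, ← Finset.sum_mul, hp]
    ring
  have hEb : ∀ (c : ℝ) (p : S → ℝ), ∑ s, p s = 1 →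
      Ep p (φ - fun _ => c) = Ep p φ - c := by
    intro c p hp
    simp only [Ep, Pi.sub_apply, mul_sub, Finset.sum_sub_distrib, ← Finset.sum_mul, hp]
    ring
  have h1 : 0 ≤ Fmm PP ((fun _ => u) - φ) := by
    apply Fmm_ge_of_mem PP P hP _ hPne
    intro p hp
    rw [hEa u p (hsum1 p (Or.inl hp)), ← hf]
    exact le_of_lt (sub_pos.mpr (hfu p hp))
  have h2 : 0 ≤ Fmm PP (φ - fun _ => v) := by
    apply Fmm_ge_of_mem PP P' hP' _ hP'ne
    intro p hp
    rw [hEb v p (hsum1 p (Or.inr hp)), ← hf]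
    exact le_of_lt (sub_pos.mpr (hvf p hp))
  have := hcbt φ u v h1 h2
  linarith
end

section
/- Let S be a finite nonempty set and ℙ a nonempty finite collection of nonempty compact convex subsets of Δ(S). Say ℙ has a cutting hyperplane if there exist φ ∈ ℝ^S and λ ∈ ℝ such that every P ∈ ℙ contains p⁺, p⁻ with E_{p⁺}[φ] > λ > E_{p⁻}[φ]. If ℙ has no cutting hyperplane, then the relation φ ≽ ψ iff max_{P∈ℙ}min_{p∈P}E_p[φ−ψ] ≥ 0 is complete: for all φ, ψ ∈ ℝ^S, φ ≽ ψ or ψ ≽ φ. -/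
open scoped BigOperators

def HasCuttingHyperplane {S : Type*} [Fintype S] (PP : Finset (Set (S → ℝ))) : Prop :=
  ∃ (φ : S → ℝ) (lam : ℝ), ∀ P ∈ PP,
    ∃ pp ∈ P, ∃ pm ∈ P, Ep pp φ > lam ∧ lam > Ep pm φ

theorem stmt11 {S : Type*} [Fintype S] [Nonempty S]
    (PP : Finset (Set (S → ℝ))) (hPP : GoodColl PP)
    (hnc : ¬ HasCuttingHyperplane PP) :
    ∀ φ ψ : S → ℝ, 0 ≤ Fmm PP (φ - ψ) ∨ 0 ≤ Fmm PP (ψ - φ) := by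
  intro φ ψ
  by_contra h
  push_neg at h
  obtain ⟨h1, h2⟩ := h
  apply hnc
  refine ⟨φ - ψ, 0, fun P hP => ?_⟩
  obtain ⟨hne, _, _, _⟩ := hPP.2 P hP
  have key : ∀ χ : S → ℝ, Fmm PP χ < 0 → ∃ p ∈ P, Ep p χ < 0 := by
    intro χ hχ
    have hmem : sInf ((fun p => Ep p χ) '' P) ∈
        (fun Q => sInf ((fun p => Ep p χ) '' Q)) '' (PP : Set (Set (S → ℝ))) := ⟨P, hP, rfl⟩
    have hfin : ((fun Q => sInf ((fun p => Ep p χ) '' Q)) '' (PP : Set (Set (S → ℝ)))).Finite :=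
      PP.finite_toSet.image _
    have hlt : sInf ((fun p => Ep p χ) '' P) < 0 :=
      lt_of_le_of_lt (le_csSup hfin.bddAbove hmem) hχ
    by_contra hc
    push_neg at hc
    have h0 : (0:ℝ) ≤ sInf ((fun p => Ep p χ) '' P) := by
      apply le_csInf (hne.image _)
      rintro x ⟨p, hp, rfl⟩
      exact hc p hp
    linarith
  obtain ⟨pm, hpm, hpm'⟩ := key (φ - ψ) h1
  obtain ⟨pp, hpp, hpp'⟩ := key (ψ - φ) h2
  have hneg : Ep pp (ψ - φ) = - Ep pp (φ - ψ) := by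
    simp only [Ep, Pi.sub_apply, mul_sub, ← Finset.sum_neg_distrib]
    apply Finset.sum_congr rfl
    intro s _
    ring
  refine ⟨pp, hpp, pm, hpm, ?_, ?_⟩
  · simpa [gt_iff_lt] using by linarith [hneg ▸ hpp']
  · simpa using hpm'
end

section
/- Let S be a finite nonempty set and ℙ a nonempty finite collection of nonempty compact convex subsets of Δ(S). If the relation φ ≽ ψ iff max_{P∈ℙ}min_{p∈P}E_p[φ−ψ] ≥ 0 is complete (for all φ, ψ ∈ ℝ^S, φ ≽ ψ or ψ ≽ φ), then ℙ has no cutting hyperplane; i.e., there do not exist φ ∈ ℝ^S and λ ∈ ℝ such that every P ∈ ℙ contains points p⁺, p⁻ with E_{p⁺}[φ] > λ > E_{p⁻}[φ]. -/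
open scoped BigOperators

theorem stmt12 {S : Type*} [Fintype S] [Nonempty S]
    (PP : Finset (Set (S → ℝ))) (hPP : GoodColl PP)
    (hcomp : ∀ φ ψ : S → ℝ, 0 ≤ Fmm PP (φ - ψ) ∨ 0 ≤ Fmm PP (ψ - φ)) :
    ¬ HasCuttingHyperplane PP := by
  rintro ⟨φ, lam, hcut⟩
  obtain ⟨hne, hP⟩ := hPP
  have hcontEp : ∀ χ : S → ℝ, Continuous fun p : S → ℝ => Ep p χ := by
    intro χ
    exact continuous_finset_sum _ fun s _ => (continuous_apply s).mul continuous_const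
  have key : ∀ χ : S → ℝ, (∀ P ∈ PP, ∃ p ∈ P, Ep p χ < 0) → Fmm PP χ < 0 := by
    intro χ h
    have hfin : ((fun P => sInf ((fun p => Ep p χ) '' P)) '' (PP : Set (Set (S → ℝ)))).Finite :=
      PP.finite_toSet.image _
    have hnon : ((fun P => sInf ((fun p => Ep p χ) '' P)) '' (PP : Set (Set (S → ℝ)))).Nonempty := by
      obtain ⟨P, hPm⟩ := hne
      exact ⟨_, ⟨P, hPm, rfl⟩⟩
    obtain ⟨P, hPm, hPeq⟩ := hnon.csSup_mem hfin
    rw [Fmm, ← hPeq]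
    obtain ⟨p, hp, hval⟩ := h P hPm
    have hbdd : BddBelow ((fun p => Ep p χ) '' P) :=
      ((hP P hPm).2.1.image (hcontEp χ)).bddBelow
    exact lt_of_le_of_lt (csInf_le hbdd ⟨p, hp, rfl⟩) hval
  have hEp : ∀ (p : S → ℝ), p ∈ probSimplex S → ∀ χ : S → ℝ,
      Ep p (χ - fun _ => lam) = Ep p χ - lam := by
    intro p hp χ
    have h1 : Ep p (χ - fun _ => lam) = ∑ s, (p s * χ s - p s * lam) := by
      simp [Ep, mul_sub]
    rw [h1, Finset.sum_sub_distrib, ← Finset.sum_mul, hp.2, one_mul, Ep]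
  have hEp' : ∀ (p : S → ℝ), p ∈ probSimplex S → ∀ χ : S → ℝ,
      Ep p ((fun _ => lam) - χ) = lam - Ep p χ := by
    intro p hp χ
    have h1 : Ep p ((fun _ => lam) - χ) = ∑ s, (p s * lam - p s * χ s) := by
      simp [Ep, mul_sub]
    rw [h1, Finset.sum_sub_distrib, ← Finset.sum_mul, hp.2, one_mul, Ep]
  have h1 : Fmm PP (φ - fun _ => lam) < 0 := by
    apply key
    intro P hPm
    obtain ⟨pp, hpp, pm, hpm, hgt, hlt⟩ := hcut P hPm
    refine ⟨pm, hpm, ?_⟩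
    rw [hEp pm ((hP P hPm).2.2.2 hpm) φ]
    linarith
  have h2 : Fmm PP ((fun _ => lam) - φ) < 0 := by
    apply key
    intro P hPm
    obtain ⟨pp, hpp, pm, hpm, hgt, hlt⟩ := hcut P hPm
    refine ⟨pp, hpp, ?_⟩
    rw [hEp' pp ((hP P hPm).2.2.2 hpp) φ]
    linarith
  rcases hcomp φ (fun _ => lam) with h | h <;> linarith
end

section
/- Let S be a finite nonempty set with exactly two elements s₁, s₂, and ℙ a nonempty finite collection of nonempty compact convex subsets of Δ(S). If max_{P∈ℙ} min_{p∈P} p(s₁) = min_{P∈ℙ} max_{p∈P} p(s₁) = α, then the probability distribution p* with p*(s₁) = α, p*(s₂) = 1 − α satisfies: for all φ ∈ ℝ^S, (1/2)·max_{P∈ℙ}min_{p∈P}E_p[φ] + (1/2)·min_{P∈ℙ}max_{p∈P}E_p[φ] = E_{p*}[φ]. -/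
open scoped BigOperators

lemma aff_sInf_nonneg {c d : ℝ} (hc : 0 ≤ c) {A : Set ℝ} (hA : A.Nonempty) (hb : BddBelow A) :
    sInf ((fun x => c * x + d) '' A) = c * sInf A + d := by
  have hm : Monotone (fun x => c * x + d) := fun x y h => by dsimp only; nlinarith
  exact (hm.map_csInf_of_continuousAt (by fun_prop) hA hb).symm

lemma aff_sSup_nonneg {c d : ℝ} (hc : 0 ≤ c) {A : Set ℝ} (hA : A.Nonempty) (hb : BddAbove A) :
    sSup ((fun x => c * x + d) '' A) = c * sSup A + d := by
  have hm : Monotone (fun x => c * x + d) := fun x y h => by dsimp only; nlinarith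
  exact (hm.map_csSup_of_continuousAt (by fun_prop) hA hb).symm

lemma aff_sInf_nonpos {c d : ℝ} (hc : c ≤ 0) {A : Set ℝ} (hA : A.Nonempty) (hb : BddAbove A) :
    sInf ((fun x => c * x + d) '' A) = c * sSup A + d := by
  have hm : Antitone (fun x => c * x + d) := fun x y h => by dsimp only; nlinarith
  exact (hm.map_csSup_of_continuousAt (by fun_prop) hA hb).symm

lemma aff_sSup_nonpos {c d : ℝ} (hc : c ≤ 0) {A : Set ℝ} (hA : A.Nonempty) (hb : BddBelow A) :
    sSup ((fun x => c * x + d) '' A) = c * sInf A + d := by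
  have hm : Antitone (fun x => c * x + d) := fun x y h => by dsimp only; nlinarith
  exact (hm.map_csInf_of_continuousAt (by fun_prop) hA hb).symm

theorem stmt13 {S : Type*} [Fintype S] [DecidableEq S]
    (s₁ s₂ : S) (hne : s₁ ≠ s₂) (hall : ∀ s : S, s = s₁ ∨ s = s₂)
    (PP : Finset (Set (S → ℝ))) (hPP : GoodColl PP)
    (α : ℝ)
    (hF : sSup ((fun P => sInf ((fun p : S → ℝ => p s₁) '' P)) '' (PP : Set (Set (S → ℝ)))) = α)
    (hG : sInf ((fun P => sSup ((fun p : S → ℝ => p s₁) '' P)) '' (PP : Set (Set (S → ℝ)))) = α) :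
    ∀ φ : S → ℝ,
      (1/2) * Fmm PP φ + (1/2) * Gmm PP φ
        = Ep (fun s => if s = s₁ then α else 1 - α) φ := by
  intro φ
  obtain ⟨hPPne, hP⟩ := hPP
  set c := φ s₁ - φ s₂ with hc
  set d := φ s₂ with hd
  have huniv : (Finset.univ : Finset S) = {s₁, s₂} := by
    ext s
    rcases hall s with h | h <;> simp [h, hne]
  have hsum : ∀ f : S → ℝ, ∑ s, f s = f s₁ + f s₂ := by
    intro f
    rw [huniv, Finset.sum_insert (by simp [hne]), Finset.sum_singleton]
  -- Ep on the simplex is affine in p s₁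
  have hEp : ∀ p ∈ probSimplex S, Ep p φ = c * p s₁ + d := by
    intro p hp
    have h2 : p s₁ + p s₂ = 1 := by rw [← hsum p]; exact hp.2
    have : Ep p φ = p s₁ * φ s₁ + p s₂ * φ s₂ := hsum _
    rw [this]
    have : p s₂ = 1 - p s₁ := by linarith
    rw [this]; ring
  -- rewrite the inner image sets
  have himg : ∀ P ∈ PP, (fun p => Ep p φ) '' P
      = (fun x => c * x + d) '' ((fun p : S → ℝ => p s₁) '' P) := by
    intro P hPmem
    rw [Set.image_image]
    exact Set.image_congr fun p hp => hEp p ((hP P hPmem).2.2.2 hp)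
  -- facts about the projected sets
  have hA : ∀ P ∈ PP, ((fun p : S → ℝ => p s₁) '' P).Nonempty ∧
      BddBelow ((fun p : S → ℝ => p s₁) '' P) ∧ BddAbove ((fun p : S → ℝ => p s₁) '' P) := by
    intro P hPmem
    obtain ⟨hne', hcpt, -, -⟩ := hP P hPmem
    have hic : IsCompact ((fun p : S → ℝ => p s₁) '' P) :=
      hcpt.image (continuous_apply s₁)
    exact ⟨hne'.image _, hic.bddBelow, hic.bddAbove⟩
  -- outer sets: finite images of PP
  have hBinf : ((fun P => sInf ((fun p : S → ℝ => p s₁) '' P)) '' (PP : Set (Set (S → ℝ)))).Nonempty ∧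
      BddBelow ((fun P => sInf ((fun p : S → ℝ => p s₁) '' P)) '' (PP : Set (Set (S → ℝ)))) ∧
      BddAbove ((fun P => sInf ((fun p : S → ℝ => p s₁) '' P)) '' (PP : Set (Set (S → ℝ)))) := by
    have hf : ((fun P => sInf ((fun p : S → ℝ => p s₁) '' P)) '' (PP : Set (Set (S → ℝ)))).Finite :=
      PP.finite_toSet.image _
    exact ⟨(hPPne.to_set).image _, hf.bddBelow, hf.bddAbove⟩
  have hBsup : ((fun P => sSup ((fun p : S → ℝ => p s₁) '' P)) '' (PP : Set (Set (S → ℝ)))).Nonempty ∧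
      BddBelow ((fun P => sSup ((fun p : S → ℝ => p s₁) '' P)) '' (PP : Set (Set (S → ℝ)))) ∧
      BddAbove ((fun P => sSup ((fun p : S → ℝ => p s₁) '' P)) '' (PP : Set (Set (S → ℝ)))) := by
    have hf : ((fun P => sSup ((fun p : S → ℝ => p s₁) '' P)) '' (PP : Set (Set (S → ℝ)))).Finite :=
      PP.finite_toSet.image _
    exact ⟨(hPPne.to_set).image _, hf.bddBelow, hf.bddAbove⟩
  have hRHS : Ep (fun s => if s = s₁ then α else 1 - α) φ = c * α + d := by
    have := hsum (fun s => (if s = s₁ then α else 1 - α) * φ s)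
    rw [Ep, this, if_pos rfl, if_neg hne.symm]
    ring
  rw [hRHS]
  rcases le_or_gt 0 c with hc0 | hc0
  · have hFmm : Fmm PP φ = c * α + d := by
      rw [Fmm]
      have : (fun P => sInf ((fun p => Ep p φ) '' P)) '' (PP : Set (Set (S → ℝ)))
          = (fun x => c * x + d) ''
            ((fun P => sInf ((fun p : S → ℝ => p s₁) '' P)) '' (PP : Set (Set (S → ℝ)))) := by
        rw [Set.image_image]
        exact Set.image_congr fun P hPmem => by
          rw [himg P hPmem, aff_sInf_nonneg hc0 (hA P hPmem).1 (hA P hPmem).2.1]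
      rw [this, aff_sSup_nonneg hc0 hBinf.1 hBinf.2.2, hF]
    have hGmm : Gmm PP φ = c * α + d := by
      rw [Gmm]
      have : (fun P => sSup ((fun p => Ep p φ) '' P)) '' (PP : Set (Set (S → ℝ)))
          = (fun x => c * x + d) ''
            ((fun P => sSup ((fun p : S → ℝ => p s₁) '' P)) '' (PP : Set (Set (S → ℝ)))) := by
        rw [Set.image_image]
        exact Set.image_congr fun P hPmem => by
          rw [himg P hPmem, aff_sSup_nonneg hc0 (hA P hPmem).1 (hA P hPmem).2.2]
      rw [this, aff_sInf_nonneg hc0 hBsup.1 hBsup.2.1, hG]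
    rw [hFmm, hGmm]; ring
  · have hc0' : c ≤ 0 := le_of_lt hc0
    have hFmm : Fmm PP φ = c * α + d := by
      rw [Fmm]
      have : (fun P => sInf ((fun p => Ep p φ) '' P)) '' (PP : Set (Set (S → ℝ)))
          = (fun x => c * x + d) ''
            ((fun P => sSup ((fun p : S → ℝ => p s₁) '' P)) '' (PP : Set (Set (S → ℝ)))) := by
        rw [Set.image_image]
        exact Set.image_congr fun P hPmem => by
          rw [himg P hPmem, aff_sInf_nonpos hc0' (hA P hPmem).1 (hA P hPmem).2.2]
      rw [this, aff_sSup_nonpos hc0' hBsup.1 hBsup.2.1, hG]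
    have hGmm : Gmm PP φ = c * α + d := by
      rw [Gmm]
      have : (fun P => sSup ((fun p => Ep p φ) '' P)) '' (PP : Set (Set (S → ℝ)))
          = (fun x => c * x + d) ''
            ((fun P => sInf ((fun p : S → ℝ => p s₁) '' P)) '' (PP : Set (Set (S → ℝ)))) := by
        rw [Set.image_image]
        exact Set.image_congr fun P hPmem => by
          rw [himg P hPmem, aff_sSup_nonpos hc0' (hA P hPmem).1 (hA P hPmem).2.1]
      rw [this, aff_sInf_nonpos hc0' hBinf.1 hBinf.2.2, hF]
    rw [hFmm, hGmm]; ring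
end

section
/- Let S be a finite nonempty set and ℙ a nonempty finite collection of nonempty compact convex subsets of Δ(S). Suppose that for all φ ∈ ℝ^S, max_{P∈ℙ}min_{p∈P}E_p[φ] = min_{P∈ℙ}max_{p∈P}E_p[φ]. Then the relation φ ≽ ψ iff max_{P∈ℙ}min_{p∈P}E_p[φ−ψ] ≥ 0 satisfies constant-bound transitivity: for all φ ∈ ℝ^S and a, b ∈ ℝ, if a·1 ≽ φ and φ ≽ b·1 then a ≥ b. -/
open scoped BigOperators

theorem stmt16 {S : Type*} [Fintype S] [Nonempty S]
    (PP : Finset (Set (S → ℝ))) (hPP : GoodColl PP)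
    (heq : ∀ φ : S → ℝ, Fmm PP φ = Gmm PP φ) :
    ∀ (φ : S → ℝ) (a b : ℝ),
      0 ≤ Fmm PP ((fun _ => a) - φ) → 0 ≤ Fmm PP (φ - fun _ => b) → b ≤ a := by
  intro φ a b h1 h2
  obtain ⟨hne, hgood⟩ := hPP
  set ψ₁ : S → ℝ := (fun _ => a) - φ with hψ₁
  set ψ₂ : S → ℝ := φ - fun _ => b with hψ₂
  -- the set defining Fmm ψ₁ is finite and nonempty, so sSup is attained
  have hAfin : ((fun P => sInf ((fun p => Ep p ψ₁) '' P)) ''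
      (PP : Set (Set (S → ℝ)))).Finite := (PP.finite_toSet).image _
  have hAne : ((fun P => sInf ((fun p => Ep p ψ₁) '' P)) ''
      (PP : Set (Set (S → ℝ)))).Nonempty := by
    exact Set.Nonempty.image _ (by exact_mod_cast hne)
  have hmem := hAne.csSup_mem hAfin
  rw [show sSup ((fun P => sInf ((fun p => Ep p ψ₁) '' P)) ''
      (PP : Set (Set (S → ℝ)))) = Fmm PP ψ₁ from rfl] at hmem
  obtain ⟨P₁, hP₁PP, hP₁eq⟩ := hmem
  obtain ⟨hP₁ne, hP₁cpt, -, hP₁sub⟩ := hgood P₁ hP₁PP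
  -- From heq, Gmm ψ₂ ≥ 0, hence sSup over P₁ of Ep · ψ₂ ≥ 0
  have hG : 0 ≤ Gmm PP ψ₂ := (heq ψ₂) ▸ h2
  have hBfin : ((fun P => sSup ((fun p => Ep p ψ₂) '' P)) ''
      (PP : Set (Set (S → ℝ)))).Finite := (PP.finite_toSet).image _
  have hsupP₁ : 0 ≤ sSup ((fun p => Ep p ψ₂) '' P₁) := by
    have : Gmm PP ψ₂ ≤ sSup ((fun p => Ep p ψ₂) '' P₁) :=
      csInf_le hBfin.bddBelow ⟨P₁, hP₁PP, rfl⟩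
    linarith
  -- The sup over compact P₁ is attained
  have hKcpt : IsCompact ((fun p => Ep p ψ₂) '' P₁) := hP₁cpt.image (Ep_continuous ψ₂)
  have hKne : ((fun p => Ep p ψ₂) '' P₁).Nonempty := hP₁ne.image _
  obtain ⟨p, hpP₁, hpeq⟩ := hKcpt.sSup_mem hKne
  have hpeq' : Ep p ψ₂ = sSup ((fun p => Ep p ψ₂) '' P₁) := hpeq
  have hEp2 : 0 ≤ Ep p ψ₂ := by rw [hpeq']; exact hsupP₁
  -- Ep p ψ₁ ≥ sInf ≥ 0
  have hK1cpt : IsCompact ((fun p => Ep p ψ₁) '' P₁) := hP₁cpt.image (Ep_continuous ψ₁)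
  have hEp1 : 0 ≤ Ep p ψ₁ := by
    have : sInf ((fun p => Ep p ψ₁) '' P₁) ≤ Ep p ψ₁ :=
      csInf_le hK1cpt.bddBelow ⟨p, hpP₁, rfl⟩
    have hP₁eq' : sInf ((fun p => Ep p ψ₁) '' P₁) = Fmm PP ψ₁ := hP₁eq
    rw [hP₁eq'] at this
    linarith
  -- sum gives a - b
  have hsum : Ep p ψ₁ + Ep p ψ₂ = a - b := by
    have hp1 : ∑ s, p s = 1 := (hP₁sub hpP₁).2
    have : Ep p ψ₁ + Ep p ψ₂ = ∑ s, p s * (a - b) := by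
      unfold Ep
      rw [← Finset.sum_add_distrib]
      apply Finset.sum_congr rfl
      intro s _
      simp [hψ₁, hψ₂]
      ring
    rw [this, ← Finset.sum_mul, hp1, one_mul]
  linarith
end
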